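/- Let (G,Λ,k,Z) be an untangled instance of Compression GFVS and suppose that for each z ∈ Z and each v ∈ V(G)∖Z there are at most k+1 paths from v to Σ_z in the flow graph F(G,Λ,Z,z) that are vertex-disjoint apart from v. If for some distinct z₁, z₂ ∈ Z the set Σ(z₁,z₂) of labels of external paths from z₁ to z₂ has size at least k³(k+1)²+2, then there is no set X ⊆ V(G)∖Z with |X| ≤ k such that (G∖X,Λ) has no non-null cycle. -/

import Mathlib

/-- Product of edge labels along a list of vertices (consecutive pairs). -/
def chainProd {V G : Type*} [Group G] (Λ : V → V → G) : List V → G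
  | [] => 1
  | [_] => 1
  | u :: v :: rest => Λ u v * chainProd Λ (v :: rest)

/-- Adjacency of the flow graph `F(G,Λ,Z,z)`. -/
def flowAdj {V Γ : Type*} [Group Γ] (Arc : V → V → Prop) (Λ : V → V → Γ)
    (Z : Set V) (z : V) : (V ⊕ Γ) → (V ⊕ Γ) → Prop
  | Sum.inl u, Sum.inl w => u ≠ w ∧ u ∉ Z ∧ w ∉ Z ∧ Arc u w
  | Sum.inl u, Sum.inr g => u ∉ Z ∧ Arc z u ∧ Λ z u = g
  | Sum.inr g, Sum.inl u => u ∉ Z ∧ Arc z u ∧ Λ z u = g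
  | Sum.inr _, Sum.inr _ => False

/-- `Σ(z₁,z₂)`: labels of external paths from `z₁` to `z₂` (paths with endpoints
in `Z` and all internal vertices outside `Z`). -/
def extLabels {V Γ : Type*} [Group Γ] (Arc : V → V → Prop) (Λ : V → V → Γ)
    (Z : Set V) (z₁ z₂ : V) : Set Γ :=
  {g : Γ | ∃ l : List V, (∀ u ∈ l, u ∉ Z) ∧
    List.Chain' Arc (z₁ :: l ++ [z₂]) ∧ (z₁ :: l ++ [z₂]).Nodup ∧
    chainProd Λ (z₁ :: l ++ [z₂]) = g}

/-!
Let `X` be a solution of size at most `k`, disjoint from `Z`. Two walks between the same ends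
that avoid `X` close up to a closed walk avoiding `X`, so they carry the same label; in
particular all external `z₁`–`z₂` paths avoiding `X` have one label. By untangledness an external
path meeting `X` has label `Λ(z₁,a) Λ(z₂,b)⁻¹` for its first arc `z₁a` and last arc `bz₂`, and
`Λ(z₁,a)` is reachable in `F(G,Λ,Z,z₁)` from the first vertex `x ∈ X` of the path without passing
through `X` before `x`; likewise `Λ(z₂,b)` from the last vertex `y ∈ X`. From a fixed `x` at most
`k + 1` labels are reachable in this way: paths to distinct labels cannot meet before `x`, since
their initial segments up to the common vertex would be walks avoiding `X` with the same ends, so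
`k + 2` labels would give `k + 2` flow paths that are disjoint apart from `x`. Hence
`|Σ(z₁,z₂)| ≤ 1 + k²(k + 1)² < k³(k + 1)² + 2`.
-/

open scoped Pointwise

theorem Set.encard_le_of_not_exists_injective {α : Type*} {s : Set α} {n : ℕ}
    (h : ¬ ∃ f : Fin (n + 1) → α, Function.Injective f ∧ ∀ i, f i ∈ s) : s.encard ≤ n := by
  by_contra! hlt
  obtain ⟨t, hts, ht⟩ := Set.exists_subset_encard_eq (Order.add_one_le_of_lt hlt)
  have hcard : Nat.card t = n + 1 := by
    rw [Nat.card_coe_set_eq, Set.ncard_def, ht]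
    rfl
  have := (Set.finite_of_encard_eq_coe ht).to_subtype
  let e := Finite.equivFinOfCardEq hcard
  exact h ⟨fun i => e.symm i, Subtype.val_injective.comp e.symm.injective,
    fun i => hts (e.symm i).2⟩

theorem Set.encard_div_le {G : Type*} [DivInvMonoid G] (s t : Set G) :
    (s / t).encard ≤ s.encard * t.encard := by
  simp only [← Set.toENat_cardinalMk, ← map_mul]
  exact Cardinal.toENat.monotone' Cardinal.mk_div_le

theorem Set.encard_biUnion_le {ι α : Type*} (s : Finset ι) (t : ι → Set α) :
    (⋃ i ∈ s, t i).encard ≤ ∑ i ∈ s, (t i).encard := by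
  classical
  induction s using Finset.induction_on with
  | empty => simp
  | insert i s hi ih =>
    rw [Finset.set_biUnion_insert, Finset.sum_insert hi]
    exact (Set.encard_union_le _ _).trans (by gcongr)

theorem List.IsChain.reverse_of_symm {α : Type*} {R : α → α → Prop}
    (hR : ∀ a b, R a b → R b a) {l : List α} (h : l.IsChain R) : l.reverse.IsChain R :=
  List.isChain_reverse.2 (h.imp fun a b => hR a b)

section Labels

variable {V Γ : Type*} [Group Γ] {Arc : V → V → Prop} {Λ : V → V → Γ} {Z S : Set V}

theorem chainProd_append_cons (l₁ : List V) (w : V) (l₂ : List V) :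
    chainProd Λ (l₁ ++ w :: l₂) = chainProd Λ (l₁ ++ [w]) * chainProd Λ (w :: l₂) := by
  induction l₁ with
  | nil => simp [chainProd]
  | cons a t ih =>
    cases t with
    | nil => simp [chainProd]
    | cons b t =>
      simp only [List.cons_append, chainProd] at ih ⊢
      rw [ih, mul_assoc]

theorem chainProd_reverse (hlab : ∀ u v, Arc u v → Λ u v = (Λ v u)⁻¹) :
    ∀ {l : List V}, l.IsChain Arc → chainProd Λ l.reverse = (chainProd Λ l)⁻¹
  | [], _ | [_], _ => by simp [chainProd]
  | a :: b :: t, h => by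
    obtain ⟨hab, hbt⟩ := List.isChain_cons_cons.1 h
    rw [show (a :: b :: t).reverse = t.reverse ++ b :: [a] by simp, chainProd_append_cons,
      ← List.reverse_cons, chainProd_reverse hlab hbt]
    simp [chainProd, hlab a b hab]

theorem chainProd_eq_one_of_untangled
    (huntangled : ∀ u v, Arc u v → u ∉ Z → v ∉ Z → Λ u v = 1) :
    ∀ {l : List V}, l.IsChain Arc → (∀ v ∈ l, v ∉ Z) → chainProd Λ l = 1
  | [], _, _ | [_], _, _ => rfl
  | a :: b :: t, h, hZ => by
    obtain ⟨hab, hbt⟩ := List.isChain_cons_cons.1 h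
    rw [chainProd, huntangled a b hab (hZ a (by simp)) (hZ b (by simp)), one_mul,
      chainProd_eq_one_of_untangled huntangled hbt fun v hv => hZ v (List.mem_cons_of_mem _ hv)]

theorem chainProd_cons_cons_of_untangled
    (huntangled : ∀ u v, Arc u v → u ∉ Z → v ∉ Z → Λ u v = 1) {z a : V} {l : List V}
    (h : (z :: a :: l).IsChain Arc) (hZ : ∀ v ∈ a :: l, v ∉ Z) :
    chainProd Λ (z :: a :: l) = Λ z a := by
  rw [chainProd, chainProd_eq_one_of_untangled huntangled (List.isChain_cons_cons.1 h).2 hZ,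
    mul_one]

def IsSolution (Arc : V → V → Prop) (Λ : V → V → Γ) (S : Set V) : Prop :=
  ∀ (a : V) (rest : List V), (∀ w ∈ a :: rest, w ∉ S) →
    (a :: rest ++ [a]).IsChain Arc → chainProd Λ (a :: rest ++ [a]) = 1

def walkLabels (Arc : V → V → Prop) (Λ : V → V → Γ) (S : Set V) (u w : V) : Set Γ :=
  {g | ∃ l : List V, (∀ v ∈ l, v ∉ S) ∧ (u :: l ++ [w]).IsChain Arc ∧
    chainProd Λ (u :: l ++ [w]) = g}

theorem IsSolution.walkLabels_subsingleton (hS : IsSolution Arc Λ S)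
    (hsymm : ∀ u v, Arc u v → Arc v u) (hlab : ∀ u v, Arc u v → Λ u v = (Λ v u)⁻¹)
    {u w : V} (hu : u ∉ S) (hw : w ∉ S) : (walkLabels Arc Λ S u w).Subsingleton := by
  rintro _ ⟨p, hpS, hp, rfl⟩ _ ⟨q, hqS, hq, rfl⟩
  have hrev : (u :: q ++ [w]).reverse = w :: (q.reverse ++ [u]) := by simp
  have hloop : u :: (p ++ w :: q.reverse) ++ [u] = (u :: p) ++ w :: (q.reverse ++ [u]) := by simp
  have hclosed := hS u (p ++ w :: q.reverse)
    (by
      simp only [List.mem_cons, List.mem_append, List.mem_reverse]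
      rintro v (rfl | hv | rfl | hv)
      exacts [hu, hpS v hv, hw, hqS v hv])
    (by rw [hloop]; exact List.isChain_split.2 ⟨hp, hrev ▸ hq.reverse_of_symm hsymm⟩)
  rw [hloop, chainProd_append_cons, ← hrev, chainProd_reverse hlab hq] at hclosed
  exact mul_inv_eq_one.1 hclosed

def IsReachPath (Arc : V → V → Prop) (Z S : Set V) (z x : V) (l : List V) : Prop :=
  (z :: l ++ [x]).IsChain Arc ∧ (l ++ [x]).Nodup ∧ (∀ v ∈ l ++ [x], v ∉ Z) ∧ ∀ v ∈ l, v ∉ S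

/-- By untangledness the label of a reach path is that of its first arc, an element of `Σ_z`;
these are the labels reachable from `x` in `F(G,Λ,Z,z)` once `S ∖ {x}` is deleted. -/
def reachLabels (Arc : V → V → Prop) (Λ : V → V → Γ) (Z S : Set V) (z x : V) : Set Γ :=
  {g | ∃ l, IsReachPath Arc Z S z x l ∧ chainProd Λ (z :: l ++ [x]) = g}

theorem IsReachPath.chainProd_mem_walkLabels
    (huntangled : ∀ u v, Arc u v → u ∉ Z → v ∉ Z → Λ u v = 1) {z x u : V} {l : List V}
    (hl : IsReachPath Arc Z S z x l) (hu : u ∈ l) :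
    chainProd Λ (z :: l ++ [x]) ∈ walkLabels Arc Λ S z u := by
  obtain ⟨hc, -, hZ, hS⟩ := hl
  obtain ⟨s, t, rfl⟩ := List.append_of_mem hu
  have hsplit : z :: (s ++ u :: t) ++ [x] = (z :: s) ++ u :: (t ++ [x]) := by simp
  rw [hsplit] at hc
  refine ⟨s, fun v hv => hS v (by simp [hv]), (List.isChain_split.1 hc).1, ?_⟩
  rw [hsplit, chainProd_append_cons (z :: s) u (t ++ [x]),
    chainProd_eq_one_of_untangled huntangled (List.isChain_split.1 hc).2
      (fun v hv => hZ v (by simp at hv ⊢; tauto)), mul_one]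

theorem isChain_map_inl_flowAdj {z : V} {m : List V} (hc : m.IsChain Arc) (hnd : m.Nodup)
    (hZ : ∀ v ∈ m, v ∉ Z) : (m.map Sum.inl).IsChain (flowAdj Arc Λ Z z) := by
  refine (List.isChain_map Sum.inl).2 ((List.isChain_isInfix m).imp fun u w huw => ?_)
  refine ⟨fun h => ?_, hZ u (huw.subset (by simp)), hZ w (huw.subset (by simp)),
    List.isChain_pair.1 (hc.infix huw)⟩
  subst h
  simpa using hnd.sublist huw.sublist

theorem flowAdj_symm (hsymm : ∀ u v, Arc u v → Arc v u) (z : V) :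
    ∀ p q, flowAdj Arc Λ Z z p q → flowAdj Arc Λ Z z q p
  | .inl _, .inl _, ⟨hne, hu, hw, h⟩ => ⟨hne.symm, hw, hu, hsymm _ _ h⟩
  | .inl _, .inr _, h | .inr _, .inl _, h => h

/-- A family of `n` paths in `F(G,Λ,Z,z)` from `v` to `Σ_z`, vertex-disjoint apart from `v`. -/
def IsFlowFan (Arc : V → V → Prop) (Λ : V → V → Γ) (Z : Set V) (z v : V) {n : ℕ}
    (P : Fin n → List (V ⊕ Γ)) : Prop :=
  (∀ i, (P i).IsChain (flowAdj Arc Λ Z z) ∧ (P i).Nodup ∧ (P i).head? = some (Sum.inl v) ∧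
    ∃ g : Γ, (P i).getLast? = some (Sum.inr g) ∧ ∃ u, u ∉ Z ∧ Arc z u ∧ Λ z u = g) ∧
  (∀ i j, i ≠ j → ∀ w ∈ P i, w ∈ P j → w = Sum.inl v)

theorem IsReachPath.isChain_flowPath (hsymm : ∀ u v, Arc u v → Arc v u)
    (huntangled : ∀ u v, Arc u v → u ∉ Z → v ∉ Z → Λ u v = 1) {z x : V} {l : List V} {g : Γ}
    (hl : IsReachPath Arc Z S z x l) (hg : chainProd Λ (z :: l ++ [x]) = g) :
    ∃ a, a ∉ Z ∧ Arc z a ∧ Λ z a = g ∧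
      (Sum.inr g :: (l ++ [x]).map Sum.inl).reverse.IsChain (flowAdj Arc Λ Z z) := by
  obtain ⟨hc, hnd, hZ, -⟩ := hl
  obtain ⟨a, m, ham⟩ := List.exists_cons_of_ne_nil (List.concat_ne_nil x l)
  rw [List.cons_append, ham] at hc hg
  rw [ham] at hnd hZ ⊢
  rw [chainProd_cons_cons_of_untangled huntangled hc hZ] at hg
  obtain ⟨hza, hc⟩ := List.isChain_cons_cons.1 hc
  refine ⟨a, hZ a (by simp), hza, hg, List.IsChain.reverse_of_symm (flowAdj_symm hsymm z) ?_⟩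
  refine List.isChain_cons.2 ⟨?_, isChain_map_inl_flowAdj hc hnd hZ⟩
  simp only [List.map_cons, List.head?_cons, Option.mem_def, Option.some.injEq]
  rintro _ rfl
  exact ⟨hZ a (by simp), hza, hg⟩

theorem reachLabels_encard_le (hsymm : ∀ u v, Arc u v → Arc v u)
    (hlab : ∀ u v, Arc u v → Λ u v = (Λ v u)⁻¹)
    (huntangled : ∀ u v, Arc u v → u ∉ Z → v ∉ Z → Λ u v = 1) (hS : IsSolution Arc Λ S)
    {z x : V} (hzS : z ∉ S) {k : ℕ}
    (hfan : ¬ ∃ P : Fin (k + 2) → List (V ⊕ Γ), IsFlowFan Arc Λ Z z x P) :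
    (reachLabels Arc Λ Z S z x).encard ≤ k + 1 := by
  refine mod_cast Set.encard_le_of_not_exists_injective ?_
  rintro ⟨g, hg, hgR⟩
  choose l hl hlg using hgR
  choose a haZ hza hag hchain using fun i => (hl i).isChain_flowPath hsymm huntangled (hlg i)
  refine hfan ⟨fun i => (Sum.inr (g i) :: (l i ++ [x]).map Sum.inl).reverse, fun i => ?_, ?_⟩
  · refine ⟨hchain i, ?_, by simp, g i, by rw [List.getLast?_reverse, List.head?_cons],
      a i, haZ i, hza i, hag i⟩
    exact List.nodup_reverse.2 (List.nodup_cons.2 ⟨by simp, (hl i).2.1.map Sum.inl_injective⟩)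
  · intro i j hij w hwi hwj
    simp only [List.mem_reverse, List.mem_cons, List.mem_map] at hwi hwj
    obtain rfl | ⟨v, hvi, rfl⟩ := hwi <;> obtain h | ⟨v', hvj, h⟩ := hwj
    · exact absurd (hg (Sum.inr_injective h)) hij
    · simp at h
    · simp at h
    · rw [Sum.inl_injective h] at hvj
      by_cases hvx : v = x
      · rw [hvx]
      have hvi' : v ∈ l i := by simpa [hvx] using hvi
      have hvj' : v ∈ l j := by simpa [hvx] using hvj
      refine absurd (hg ?_) hij
      rw [← hlg i, ← hlg j]
      exact hS.walkLabels_subsingleton hsymm hlab hzS ((hl i).2.2.2 v hvi')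
        ((hl i).chainProd_mem_walkLabels huntangled hvi')
        ((hl j).chainProd_mem_walkLabels huntangled hvj')

theorem arcLabel_mem_reachLabels
    (huntangled : ∀ u v, Arc u v → u ∉ Z → v ∉ Z → Λ u v = 1) {z a : V} {m : List V}
    (hc : (z :: a :: m).IsChain Arc) (hnd : (a :: m).Nodup) (hZ : ∀ v ∈ a :: m, v ∉ Z)
    (hmeet : ∃ v ∈ a :: m, v ∈ S) : ∃ x ∈ S, Λ z a ∈ reachLabels Arc Λ Z S z x := by
  classical
  obtain ⟨x, hx⟩ := Option.isSome_iff_exists.1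
    (List.find?_isSome.2 (by simpa using hmeet) : ((a :: m).find? (· ∈ S)).isSome)
  obtain ⟨hxS, s, t, hst, hsS⟩ := List.find?_eq_some_iff_append.1 hx
  have hlabel := chainProd_cons_cons_of_untangled huntangled hc hZ
  rw [hst] at hc hnd hZ hlabel
  rw [← List.cons_append] at hc hlabel
  obtain ⟨hcs, hct⟩ := List.isChain_split.1 hc
  rw [chainProd_append_cons, chainProd_eq_one_of_untangled huntangled hct
    (fun v hv => hZ v (by simp at hv ⊢; tauto)), mul_one] at hlabel
  refine ⟨x, by simpa using hxS, s, ⟨hcs, hnd.sublist (by simp), fun v hv => hZ v ?_,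
    fun v hv => by simpa using hsS v hv⟩, hlabel⟩
  simp at hv ⊢
  tauto

theorem chainProd_external_eq_div (hsymm : ∀ u v, Arc u v → Arc v u)
    (hlab : ∀ u v, Arc u v → Λ u v = (Λ v u)⁻¹)
    (huntangled : ∀ u v, Arc u v → u ∉ Z → v ∉ Z → Λ u v = 1) {z₁ z₂ a b : V} {m m' : List V}
    (hrev : (a :: m).reverse = b :: m') (hc : (z₁ :: a :: m ++ [z₂]).IsChain Arc)
    (hZ : ∀ v ∈ a :: m, v ∉ Z) : chainProd Λ (z₁ :: a :: m ++ [z₂]) = Λ z₁ a / Λ z₂ b := by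
  have htail : (a :: m ++ [z₂]).IsChain Arc := (List.isChain_cons_cons.1 hc).2
  have htail_rev : (a :: m ++ [z₂]).reverse = z₂ :: b :: m' := by simp [← hrev]
  have hZ' : ∀ v ∈ b :: m', v ∉ Z := fun v hv => hZ v (List.mem_reverse.1 (hrev ▸ hv))
  have hc' : (z₂ :: b :: m').IsChain Arc := by
    rw [← htail_rev]
    exact htail.reverse_of_symm hsymm
  rw [List.cons_append, List.cons_append, chainProd, ← List.cons_append,
    ← inv_inv (chainProd Λ (a :: m ++ [z₂])), ← chainProd_reverse hlab htail, htail_rev,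
    chainProd_cons_cons_of_untangled huntangled hc' hZ', div_eq_mul_inv]

theorem extLabels_subset (hsymm : ∀ u v, Arc u v → Arc v u)
    (hlab : ∀ u v, Arc u v → Λ u v = (Λ v u)⁻¹)
    (huntangled : ∀ u v, Arc u v → u ∉ Z → v ∉ Z → Λ u v = 1) {z₁ z₂ : V} :
    extLabels Arc Λ Z z₁ z₂ ⊆ walkLabels Arc Λ S z₁ z₂ ∪
      ⋃ x ∈ S, ⋃ y ∈ S, reachLabels Arc Λ Z S z₁ x / reachLabels Arc Λ Z S z₂ y := by
  rintro _ ⟨l, hlZ, hc, hnd, rfl⟩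
  by_cases hlS : ∀ v ∈ l, v ∉ S
  · exact Or.inl ⟨l, hlS, hc, rfl⟩
  push Not at hlS
  obtain ⟨a, m, rfl⟩ := List.exists_cons_of_ne_nil (List.ne_nil_of_mem hlS.choose_spec.1)
  obtain ⟨b, m', hrev⟩ :=
    List.exists_cons_of_ne_nil (List.reverse_ne_nil_iff.2 (List.cons_ne_nil a m))
  have hnd₁ : (a :: m).Nodup := hnd.sublist (by simp)
  have hnd₂ : (b :: m').Nodup := hrev ▸ List.nodup_reverse.2 hnd₁
  have hc₁ : (z₁ :: a :: m).IsChain Arc := hc.left_of_append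
  have hc₂ : (z₂ :: b :: m').IsChain Arc := by
    have := hc.reverse_of_symm hsymm
    rw [show (z₁ :: a :: m ++ [z₂]).reverse = z₂ :: b :: m' ++ [z₁] by simp [← hrev]] at this
    exact this.left_of_append
  obtain ⟨x, hxS, hx⟩ := arcLabel_mem_reachLabels huntangled hc₁ hnd₁ hlZ hlS
  obtain ⟨y, hyS, hy⟩ := arcLabel_mem_reachLabels (S := S) huntangled hc₂ hnd₂
    (fun v hv => hlZ v (List.mem_reverse.1 (hrev ▸ hv)))
    (let ⟨v, hv, hvS⟩ := hlS; ⟨v, hrev ▸ List.mem_reverse.2 hv, hvS⟩)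
  rw [chainProd_external_eq_div hsymm hlab huntangled hrev hc hlZ]
  exact Or.inr (Set.mem_iUnion₂.2 ⟨x, hxS, Set.mem_iUnion₂.2 ⟨y, hyS, Set.div_mem_div hx hy⟩⟩)

theorem extLabels_encard_le (hsymm : ∀ u v, Arc u v → Arc v u)
    (hlab : ∀ u v, Arc u v → Λ u v = (Λ v u)⁻¹)
    (huntangled : ∀ u v, Arc u v → u ∉ Z → v ∉ Z → Λ u v = 1) {X : Finset V}
    (hS : IsSolution Arc Λ X) {z₁ z₂ : V} (hz₁ : z₁ ∉ X) (hz₂ : z₂ ∉ X) {c : ℕ∞}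
    (hR₁ : ∀ x ∈ X, (reachLabels Arc Λ Z X z₁ x).encard ≤ c)
    (hR₂ : ∀ y ∈ X, (reachLabels Arc Λ Z X z₂ y).encard ≤ c) :
    (extLabels Arc Λ Z z₁ z₂).encard ≤ 1 + X.card * (X.card * (c * c)) :=
  calc _ ≤ (walkLabels Arc Λ X z₁ z₂).encard + (⋃ x ∈ X, ⋃ y ∈ X,
        reachLabels Arc Λ Z X z₁ x / reachLabels Arc Λ Z X z₂ y).encard :=
        (Set.encard_le_encard (extLabels_subset hsymm hlab huntangled)).trans
          (Set.encard_union_le _ _)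
    _ ≤ 1 + ∑ x ∈ X, ∑ y ∈ X, c * c := by
        gcongr
        · exact Set.encard_le_one_iff_subsingleton.2 (hS.walkLabels_subsingleton hsymm hlab hz₁ hz₂)
        · refine (Set.encard_biUnion_le _ _).trans (Finset.sum_le_sum fun x hx => ?_)
          refine (Set.encard_biUnion_le _ _).trans (Finset.sum_le_sum fun y hy => ?_)
          exact (Set.encard_div_le _ _).trans (mul_le_mul' (hR₁ x hx) (hR₂ y hy))
    _ = _ := by simp

end Labels

theorem no_solution_many_external_labels_general {V Γ : Type*} [Group Γ]
    (Arc : V → V → Prop) (Λ : V → V → Γ)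
    (hsymm : ∀ u v, Arc u v → Arc v u)
    (hlab : ∀ u v, Arc u v → Λ u v = (Λ v u)⁻¹)
    (Z : Set V) (k : ℕ)
    (huntangled : ∀ u v, Arc u v → u ∉ Z → v ∉ Z → Λ u v = 1)
    (hflow : ∀ z ∈ Z, ∀ v, v ∉ Z →
      ¬ ∃ P : Fin (k + 2) → List (V ⊕ Γ),
        (∀ i, (P i).Chain' (flowAdj Arc Λ Z z) ∧ (P i).Nodup ∧
          (P i).head? = some (Sum.inl v) ∧
          ∃ g : Γ, (P i).getLast? = some (Sum.inr g) ∧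
            ∃ u, u ∉ Z ∧ Arc z u ∧ Λ z u = g) ∧
        (∀ i j, i ≠ j → ∀ w ∈ P i, w ∈ P j → w = Sum.inl v))
    (z₁ z₂ : V) (hz₁ : z₁ ∈ Z) (hz₂ : z₂ ∈ Z)
    (hbig : ∃ f : Fin (k ^ 3 * (k + 1) ^ 2 + 2) → Γ, Function.Injective f ∧
      ∀ i, f i ∈ extLabels Arc Λ Z z₁ z₂) :
    ¬ ∃ X : Finset V, (∀ x ∈ X, x ∉ Z) ∧ X.card ≤ k ∧
      ∀ (a : V) (rest : List V), (∀ w ∈ a :: rest, w ∉ X) →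
        List.Chain' Arc (a :: rest ++ [a]) → chainProd Λ (a :: rest ++ [a]) = 1 := by
  rintro ⟨X, hXZ, hXcard, hX⟩
  obtain ⟨f, hf, hfmem⟩ := hbig
  have hS : IsSolution Arc Λ (X : Set V) := hX
  have hR : ∀ z ∈ Z, ∀ x ∈ X, (reachLabels Arc Λ Z X z x).encard ≤ k + 1 := fun z hz x hx =>
    reachLabels_encard_le hsymm hlab huntangled hS (fun h => hXZ z h hz) (hflow z hz x (hXZ x hx))
  have hlower : ((k ^ 3 * (k + 1) ^ 2 + 2 : ℕ) : ℕ∞) ≤ (extLabels Arc Λ Z z₁ z₂).encard := by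
    simpa using Set.encard_le_encard_of_injOn (s := Set.univ) (fun i _ => hfmem i) hf.injOn
  have hupper : (extLabels Arc Λ Z z₁ z₂).encard ≤ ((1 + k * (k * ((k + 1) * (k + 1))) : ℕ) : ℕ∞) :=
    (extLabels_encard_le hsymm hlab huntangled hS (fun h => hXZ z₁ h hz₁) (fun h => hXZ z₂ h hz₂)
      (hR z₁ hz₁) (hR z₂ hz₂)).trans (by push_cast; gcongr)
  have hk : k * (k * ((k + 1) * (k + 1))) ≤ k ^ 3 * (k + 1) ^ 2 := by
    rcases k.eq_zero_or_pos with rfl | hk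
    · simp
    · calc _ = k ^ 2 * (k + 1) ^ 2 := by ring
        _ ≤ _ := by gcongr; omega
  have := hlower.trans hupper
  norm_cast at this
  omega

/-- Lemma 6: in an untangled instance, if every `v ∉ Z` has at most `k+1`
paths to `Σ_z` in every flow graph that are vertex-disjoint apart from `v`,
and `|Σ(z₁,z₂)| ≥ k³(k+1)²+2` for some distinct `z₁,z₂ ∈ Z`, then no solution
of size at most `k` exists. -/
theorem no_solution_many_external_labels {V Γ : Type*} [Fintype V] [DecidableEq V] [Group Γ]
    (Arc : V → V → Prop) (Λ : V → V → Γ)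
    (hsymm : ∀ u v, Arc u v → Arc v u)
    (hlab : ∀ u v, Arc u v → Λ u v = (Λ v u)⁻¹)
    (Z : Set V) (k : ℕ)
    (hZsol : ∀ (a : V) (rest : List V), (∀ w ∈ a :: rest, w ∉ Z) →
      List.Chain' Arc (a :: rest ++ [a]) → chainProd Λ (a :: rest ++ [a]) = 1)
    (huntangled : ∀ u v, Arc u v → u ∉ Z → v ∉ Z → Λ u v = 1)
    (hflow : ∀ z ∈ Z, ∀ v, v ∉ Z →
      ¬ ∃ P : Fin (k + 2) → List (V ⊕ Γ),
        (∀ i, (P i).Chain' (flowAdj Arc Λ Z z) ∧ (P i).Nodup ∧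
          (P i).head? = some (Sum.inl v) ∧
          ∃ g : Γ, (P i).getLast? = some (Sum.inr g) ∧
            ∃ u, u ∉ Z ∧ Arc z u ∧ Λ z u = g) ∧
        (∀ i j, i ≠ j → ∀ w ∈ P i, w ∈ P j → w = Sum.inl v))
    (z₁ z₂ : V) (hz₁ : z₁ ∈ Z) (hz₂ : z₂ ∈ Z) (hne : z₁ ≠ z₂)
    (hbig : ∃ f : Fin (k ^ 3 * (k + 1) ^ 2 + 2) → Γ, Function.Injective f ∧
      ∀ i, f i ∈ extLabels Arc Λ Z z₁ z₂) :
    ¬ ∃ X : Finset V, (∀ x ∈ X, x ∉ Z) ∧ X.card ≤ k ∧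
      ∀ (a : V) (rest : List V), (∀ w ∈ a :: rest, w ∉ X) →
        List.Chain' Arc (a :: rest ++ [a]) → chainProd Λ (a :: rest ++ [a]) = 1 :=
  no_solution_many_external_labels_general Arc Λ hsymm hlab Z k huntangled hflow z₁ z₂ hz₁ hz₂ hbig
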